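/- arXiv:math/9903155 — 2 statements merged into one kernel-verified Lean document; each statement's English description precedes it below -/
import Mathlib

section
/- For any ordered dissection A of [1,d], any index i, and any subset X ⊆ [1,d], one has φ(R_{i,X} A) = ρ_{i,ε_A(X)} φ(A), i.e. applying the raising operator R_{i,X} = ∏_{x∈X} R_{i,x} to A and then taking component cardinalities equals applying the product of simple raising operators ρ_{i,ε_A(x)} (over x ∈ X) to the cardinality vector of A. -/
/-- An ordered dissection of `{0,…,d-1}` (indexed from 0): a sequence of pairwise
disjoint subsets, vanishing from index `d` on, whose union is everything. -/
def IsDissection (d : ℕ) (A : ℕ → Finset (Fin d)) : Prop :=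
  (∀ i j, i ≠ j → Disjoint (A i) (A j)) ∧ (∀ k, d ≤ k → A k = ∅) ∧
    ∀ s : Fin d, ∃ i, s ∈ A i

/-- Dominance order on ordered dissections: each initial union of components of `A`
is contained in the corresponding one of `B`. -/
def DomD {d : ℕ} (A B : ℕ → Finset (Fin d)) : Prop :=
  ∀ i : ℕ, (Finset.range (i + 1)).biUnion A ⊆ (Finset.range (i + 1)).biUnion B

/-- `eps A s` is the index of the component of `A` containing `s`
(the least such index; it is unique for a dissection). -/
noncomputable def eps {d : ℕ} (A : ℕ → Finset (Fin d)) (s : Fin d) : ℕ :=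
  open scoped Classical in
  if h : ∃ i, s ∈ A i then Nat.find h else 0

/-- The simple raising operator `R_{i,s}`: move `s` into component `i`
if `eps A s > i`, otherwise do nothing. -/
noncomputable def Rop {d : ℕ} (i : ℕ) (s : Fin d) (A : ℕ → Finset (Fin d)) : ℕ → Finset (Fin d) :=
  if eps A s ≤ i then A
  else fun k =>
    if k = i then insert s (A k) else if k = eps A s then (A k).erase s else A k

/-- `φ(A)`: the tuple of component cardinalities. -/
def phi {d : ℕ} (A : ℕ → Finset (Fin d)) : ℕ → ℤ :=
  fun k => ((A k).card : ℤ)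

/-- Dominance order on integer tuples: all partial sums of `l` at most those of `m`. -/
def Dom (l m : ℕ → ℤ) : Prop :=
  ∀ i : ℕ, ∑ k ∈ Finset.range (i + 1), l k ≤ ∑ k ∈ Finset.range (i + 1), m k

/-- The simple raising operator ρ_{i,j} on integer tuples: add 1 to component `i` and
subtract 1 from component `j` when `i < j`; the identity when `j ≤ i`. -/
def rho (i j : ℕ) (l : ℕ → ℤ) : ℕ → ℤ :=
  if i < j then fun k => if k = i then l k + 1 else if k = j then l k - 1 else l k else l

lemma eps_spec {d : ℕ} {A : ℕ → Finset (Fin d)} (hA : IsDissection d A) (s : Fin d) :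
    s ∈ A (eps A s) := by
  classical
  obtain ⟨i, hi⟩ := hA.2.2 s
  have h : ∃ i, s ∈ A i := ⟨i, hi⟩
  rw [eps, dif_pos h]
  exact Nat.find_spec h

lemma eps_unique {d : ℕ} {A : ℕ → Finset (Fin d)} (hA : IsDissection d A) {s : Fin d} {k : ℕ}
    (h : s ∈ A k) : eps A s = k := by
  by_contra hne
  exact Finset.disjoint_left.mp (hA.1 _ _ hne) (eps_spec hA s) h

lemma eps_lt {d : ℕ} {A : ℕ → Finset (Fin d)} (hA : IsDissection d A) (s : Fin d) :
    eps A s < d := by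
  by_contra h
  have := hA.2.1 _ (le_of_not_gt h)
  have := eps_spec hA s
  simp_all

lemma eps_congr {d : ℕ} {A B : ℕ → Finset (Fin d)} (hA : IsDissection d A)
    (hB : IsDissection d B) {s : Fin d} (h : ∀ k, s ∈ A k ↔ s ∈ B k) :
    eps A s = eps B s :=
  (eps_unique hB ((h _).mp (eps_spec hA s))).symm

lemma step {d : ℕ} (i : ℕ) {B : ℕ → Finset (Fin d)} (hB : IsDissection d B) (x : Fin d) :
    IsDissection d (Rop i x B) ∧ (∀ t : Fin d, t ≠ x → ∀ k, (t ∈ Rop i x B k ↔ t ∈ B k)) ∧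
      phi (Rop i x B) = rho i (eps B x) (phi B) := by
  set j := eps B x with hj
  by_cases h : j ≤ i
  · rw [Rop, if_pos h, rho, if_neg (not_lt.mpr h)]
    exact ⟨hB, fun _ _ _ => Iff.rfl, rfl⟩
  · push_neg at h
    have hij : i ≠ j := ne_of_lt h
    have hxj : x ∈ B j := eps_spec hB x
    have hxi : x ∉ B i := fun hxi => hij ((eps_unique hB hxi).symm)
    have hR : Rop i x B = fun k =>
        if k = i then insert x (B k) else if k = j then (B k).erase x else B k := by
      rw [Rop, if_neg (not_le.mpr h)]
    have hmem : ∀ t : Fin d, t ≠ x → ∀ k, (t ∈ Rop i x B k ↔ t ∈ B k) := by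
      intro t ht k
      rw [hR]
      by_cases hk : k = i
      · simp [hk, ht]
      · by_cases hk' : k = j <;> simp [hk, hk', ht, Ne.symm hij]
    have hxmem : ∀ k, x ∈ Rop i x B k ↔ k = i := by
      intro k
      rw [hR]
      by_cases hk : k = i
      · simp [hk]
      · by_cases hk' : k = j
        · simp [hk, hk', Ne.symm hij]
        · simp only [if_neg hk, if_neg hk']
          constructor
          · intro hx; exact absurd (eps_unique hB hx).symm hk'
          · intro hx; exact absurd hx hk
    refine ⟨⟨?_, ?_, ?_⟩, hmem, ?_⟩
    · intro k l hkl
      rw [Finset.disjoint_left]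
      intro t htk htl
      by_cases ht : t = x
      · subst ht
        exact hkl (((hxmem k).mp htk).trans ((hxmem l).mp htl).symm)
      · exact Finset.disjoint_left.mp (hB.1 k l hkl)
          ((hmem t ht k).mp htk) ((hmem t ht l).mp htl)
    · intro k hk
      have hki : k ≠ i := by
        rintro rfl
        exact absurd (lt_trans h (eps_lt hB x)) (not_lt.mpr hk)
      have hkj : k ≠ j := by
        rintro rfl
        exact absurd (eps_lt hB x) (not_lt.mpr hk)
      rw [hR]
      simp [hki, hkj, hB.2.1 k hk]
    · intro s
      by_cases hs : s = x
      · exact ⟨i, by rw [hs]; exact (hxmem i).mpr rfl⟩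
      · obtain ⟨k, hk⟩ := hB.2.2 s
        exact ⟨k, (hmem s hs k).mpr hk⟩
    · funext k
      rw [rho, if_pos h]
      simp only [phi, hR]
      by_cases hk : k = i
      · simp [hk, Finset.card_insert_of_notMem hxi]
      · by_cases hk' : k = j
        · subst hk'
          simp only [if_neg hk, if_pos rfl, if_true, Finset.card_erase_of_mem hxj]
          have h1 : 1 ≤ (B j).card := Finset.card_pos.mpr ⟨x, hxj⟩
          omega
        · simp [hk, hk']

lemma keyL {d : ℕ} (i : ℕ) (L : List (Fin d)) (hL : L.Nodup) :
    ∀ (B : ℕ → Finset (Fin d)), IsDissection d B →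
      IsDissection d (L.foldr (fun s B => Rop i s B) B) ∧
      (∀ t : Fin d, t ∉ L → ∀ k, (t ∈ L.foldr (fun s B => Rop i s B) B k ↔ t ∈ B k)) ∧
      phi (L.foldr (fun s B => Rop i s B) B) =
        L.foldr (fun x l => rho i (eps B x) l) (phi B) := by
  induction L with
  | nil => exact fun B hB => ⟨hB, fun _ _ _ => Iff.rfl, rfl⟩
  | cons x rest ih =>
    intro B hB
    obtain ⟨hx, hrest⟩ := List.nodup_cons.mp hL
    obtain ⟨hC, hCmem, hCphi⟩ := ih hrest B hB
    set C := rest.foldr (fun s B => Rop i s B) B with hCdef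
    obtain ⟨hD, hDmem, hDphi⟩ := step i hC x
    have hepsx : eps C x = eps B x := eps_congr hC hB (hCmem x hx)
    refine ⟨hD, ?_, ?_⟩
    · intro t ht k
      simp only [List.mem_cons, not_or] at ht
      exact (hDmem t ht.1 k).trans (hCmem t ht.2 k)
    · simp only [List.foldr_cons]
      rw [hDphi, hepsx, hCphi]

/-- `φ(R_{i,X} A) = ρ_{i,ε_A(X)} φ(A)`: applying the product raising operator
`R_{i,X} = ∏_{x∈X} R_{i,x}` to `A` and taking cardinalities agrees with applying
`∏_{x∈X} ρ_{i,ε_A(x)}` to the cardinality vector of `A`. -/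
theorem stmt7 (d : ℕ) (A : ℕ → Finset (Fin d)) (hA : IsDissection d A)
    (i : ℕ) (X : Finset (Fin d)) :
    phi (X.toList.foldr (fun s B => Rop i s B) A) =
      X.toList.foldr (fun x l => rho i (eps A x) l) (phi A) := by
  exact (keyL i X.toList X.nodup_toList A hA).2.2
end

section
/- For any raising operator R = R_{i_1,s_1} R_{i_2,s_2} ⋯ and any ordered dissection A, one has A ≤ R(A) in the dominance order; moreover if ε_A(s_k) > i_k for some k then A < R(A). -/
/-!
Inside a single step `R_{i,s}` only `s` changes component, and it moves to a smaller index, so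
every initial union of components can only grow: `A ≤ R_{i,s}(A)`, and `≤` is transitive.
For strictness, dominance `A ≤ B` forces `ε_B(t) ≤ ε_A(t)` for every `t`. Once the factor
`R_{i_k,s_k}` has been applied, `s_k` sits in a component of index at most `i_k`, and the factors
applied after it keep it there; so `ε_{R(A)}(s_k) ≤ i_k < ε_A(s_k)` and `R(A) ≠ A`.
-/

section RaisingOperators

variable {d : ℕ}

lemma eps_le_of_mem {A : ℕ → Finset (Fin d)} {s : Fin d} {k : ℕ} (h : s ∈ A k) :
    eps A s ≤ k := by
  have hex : ∃ i, s ∈ A i := ⟨k, h⟩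
  simp only [eps, dif_pos hex]
  exact Nat.find_min' hex h

lemma eps_mem {A : ℕ → Finset (Fin d)} {s : Fin d} (hs : ∃ k, s ∈ A k) :
    s ∈ A (eps A s) := by
  simp only [eps, dif_pos hs]
  exact Nat.find_spec hs

lemma DomD.refl (A : ℕ → Finset (Fin d)) : DomD A A := fun _ => subset_rfl

lemma DomD.trans {A B C : ℕ → Finset (Fin d)} (hAB : DomD A B) (hBC : DomD B C) :
    DomD A C := fun i => (hAB i).trans (hBC i)

lemma DomD.exists_mem_le {A B : ℕ → Finset (Fin d)} (h : DomD A B) {s : Fin d} {k : ℕ}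
    (hs : s ∈ A k) : ∃ j ≤ k, s ∈ B j := by
  have hmem : s ∈ (Finset.range (k + 1)).biUnion A :=
    Finset.mem_biUnion.mpr ⟨k, Finset.self_mem_range_succ k, hs⟩
  obtain ⟨j, hj, hsj⟩ := Finset.mem_biUnion.mp (h k hmem)
  exact ⟨j, Nat.lt_succ_iff.mp (Finset.mem_range.mp hj), hsj⟩

lemma DomD.eps_le {A B : ℕ → Finset (Fin d)} (h : DomD A B) {s : Fin d} {k : ℕ}
    (hs : s ∈ A k) : eps B s ≤ k := by
  obtain ⟨j, hjk, hsj⟩ := h.exists_mem_le hs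
  exact (eps_le_of_mem hsj).trans hjk

lemma domD_Rop (A : ℕ → Finset (Fin d)) (i : ℕ) (s : Fin d) : DomD A (Rop i s A) := by
  by_cases hact : eps A s ≤ i
  · simpa only [Rop, if_pos hact] using DomD.refl A
  intro j t ht
  obtain ⟨k, hk, htk⟩ := Finset.mem_biUnion.mp ht
  rw [Finset.mem_range] at hk
  rw [Finset.mem_biUnion]
  by_cases hts : t = s
  · subst hts
    -- `t` moves down from `eps A t ≤ k` to `i < eps A t`
    have := eps_le_of_mem htk
    refine ⟨i, Finset.mem_range.mpr (by omega), ?_⟩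
    simp [Rop, hact]
  · refine ⟨k, Finset.mem_range.mpr hk, ?_⟩
    simp only [Rop, if_neg hact]
    split_ifs <;> simp [htk, hts]

lemma eps_Rop_self_le (A : ℕ → Finset (Fin d)) (i : ℕ) (s : Fin d) :
    eps (Rop i s A) s ≤ i := by
  by_cases hact : eps A s ≤ i
  · simpa only [Rop, if_pos hact] using hact
  · exact eps_le_of_mem (by simp [Rop, hact])

/-- The raising operator `R_{i_1,s_1} ⋯ R_{i_n,s_n}` encoded by `[(i_1,s_1), …, (i_n,s_n)]`. -/
noncomputable def raise (L : List (ℕ × Fin d)) (A : ℕ → Finset (Fin d)) :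
    ℕ → Finset (Fin d) :=
  L.foldr (fun p B => Rop p.1 p.2 B) A

lemma domD_raise (L : List (ℕ × Fin d)) (A : ℕ → Finset (Fin d)) : DomD A (raise L A) := by
  induction L with
  | nil => exact DomD.refl A
  | cons p L ih => exact ih.trans (domD_Rop _ p.1 p.2)

lemma eps_raise_le {L : List (ℕ × Fin d)} {p : ℕ × Fin d} (hp : p ∈ L)
    {A : ℕ → Finset (Fin d)} (hs : ∃ k, p.2 ∈ A k) : eps (raise L A) p.2 ≤ p.1 := by
  induction L with
  | nil => simp at hp
  | cons q L ih =>
    rcases List.mem_cons.mp hp with rfl | hpL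
    · exact eps_Rop_self_le _ p.1 p.2
    · obtain ⟨k, hk⟩ := hs
      obtain ⟨j, -, hj⟩ := (domD_raise L A).exists_mem_le hk
      calc eps (raise (q :: L) A) p.2
          ≤ eps (raise L A) p.2 := (domD_Rop _ q.1 q.2).eps_le (eps_mem ⟨j, hj⟩)
        _ ≤ p.1 := ih hpL

end RaisingOperators

/-- For any raising operator `R` (a finite product of simple raising operators,
given as a list of pairs `(i_k, s_k)`) one has `A ≤ R(A)`; if moreover
`ε_A(s_k) > i_k` for some `k`, then `A < R(A)`. -/
theorem stmt8 (d : ℕ) (A : ℕ → Finset (Fin d)) (hA : IsDissection d A)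
    (L : List (ℕ × Fin d)) :
    DomD A (L.foldr (fun p B => Rop p.1 p.2 B) A) ∧
      ((∃ p ∈ L, p.1 < eps A p.2) → L.foldr (fun p B => Rop p.1 p.2 B) A ≠ A) := by
  refine ⟨domD_raise L A, ?_⟩
  rintro ⟨p, hp, hlt⟩ hfix
  have hle : eps (raise L A) p.2 ≤ p.1 := eps_raise_le hp (hA.2.2 p.2)
  rw [raise, hfix] at hle
  omega
end
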